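/- Let d = 2k+1 be an odd prime and ξ ∈ ℂ a primitive d-th root of unity. If I is a nonempty proper subset of {1, …, k}, then the real number ∑_{i∈I} (ξ^i + ξ^{-i}) is irrational. -/

import Mathlib

open Polynomial Finset in
/-- Let `d = 2k+1` be an odd prime and `ξ ∈ ℂ` a primitive `d`-th root of unity. If `I` is a
nonempty proper subset of `{1, …, k}`, then `∑_{i ∈ I} (ξ^i + ξ^{-i})` is irrational (it is a
real number which is not the image of any rational number). -/
theorem sum_subset_irrational (d k : ℕ) (hd : d = 2 * k + 1) (hp : d.Prime)
    (ξ : ℂ) (hξ : IsPrimitiveRoot ξ d) (I : Finset ℕ) (hI : I ⊆ Finset.Icc 1 k)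
    (hne : I.Nonempty) (hproper : I ≠ Finset.Icc 1 k) :
    ∀ q : ℚ, ∑ i ∈ I, (ξ ^ i + (ξ ^ i)⁻¹) ≠ (q : ℂ) := by
  intro q hq
  haveI : Fact d.Prime := ⟨hp⟩
  have hdpos : 0 < d := hp.pos
  have hξd : ξ ^ d = 1 := hξ.pow_eq_one
  have hmem : ∀ i ∈ I, 1 ≤ i ∧ i ≤ k := by
    intro i hi; simpa [Finset.mem_Icc] using hI hi
  -- rewrite inverses
  have hinv : ∀ i ∈ I, (ξ ^ i)⁻¹ = ξ ^ (d - i) := by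
    intro i hi
    obtain ⟨h1, h2⟩ := hmem i hi
    refine inv_eq_of_mul_eq_one_right ?_
    rw [← pow_add, show i + (d - i) = d by omega, hξd]
  set J : Finset ℕ := I ∪ I.image (fun i => d - i) with hJ
  have hdisj : Disjoint I (I.image (fun i => d - i)) := by
    rw [Finset.disjoint_left]
    intro a ha ha'
    obtain ⟨h1, h2⟩ := hmem a ha
    obtain ⟨b, hb, hb'⟩ := Finset.mem_image.mp ha'
    obtain ⟨hb1, hb2⟩ := hmem b hb
    omega
  have hsum : ∑ j ∈ J, ξ ^ j = (q : ℂ) := by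
    rw [hJ, Finset.sum_union hdisj, Finset.sum_image]
    · rw [← hq, ← Finset.sum_add_distrib]
      exact Finset.sum_congr rfl fun i hi => by rw [hinv i hi]
    · intro a ha b hb h
      obtain ⟨ha1, ha2⟩ := hmem a ha
      obtain ⟨hb1, hb2⟩ := hmem b hb
      simp only at h
      omega
  have hJsub : ∀ j ∈ J, 1 ≤ j ∧ j ≤ d - 1 := by
    intro j hj
    rcases Finset.mem_union.mp hj with h | h
    · obtain ⟨h1, h2⟩ := hmem j h; omega
    · obtain ⟨b, hb, hb'⟩ := Finset.mem_image.mp h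
      obtain ⟨h1, h2⟩ := hmem b hb; omega
  -- The polynomial
  set f : ℚ[X] := (∑ j ∈ J, X ^ j) - C q with hf
  have hcoeff : ∀ j, 1 ≤ j → f.coeff j = if j ∈ J then 1 else 0 := by
    intro j hj
    rw [hf, coeff_sub, coeff_C, if_neg (by omega), finset_sum_coeff]
    simp only [coeff_X_pow]
    rw [Finset.sum_ite_eq J j (fun _ => (1 : ℚ))]
    simp
  obtain ⟨j₁, hj₁⟩ := hne
  have hj₁J : j₁ ∈ J := Finset.mem_union_left _ hj₁
  have hfne : f ≠ 0 := by
    intro h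
    have := hcoeff j₁ (hmem j₁ hj₁).1
    rw [h, if_pos hj₁J] at this
    simp at this
  have haev : aeval ξ f = 0 := by
    rw [hf]
    simp only [map_sub, map_sum, map_pow, aeval_X, aeval_C]
    rw [hsum]
    simp
  have hdvd : cyclotomic d ℚ ∣ f := by
    rw [cyclotomic_eq_minpoly_rat hξ hdpos]
    exact minpoly.dvd ℚ ξ haev
  have hdegf : f.natDegree ≤ d - 1 := by
    apply le_trans (natDegree_sub_le _ _)
    simp only [natDegree_C, max_eq_left (Nat.zero_le _)]
    refine le_trans (natDegree_sum_le _ _) ?_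
    rw [Finset.fold_max_le]
    refine ⟨Nat.zero_le _, fun j hj => ?_⟩
    simp only [Function.comp, natDegree_X_pow]
    exact (hJsub j hj).2
  have hdegc : (cyclotomic d ℚ).natDegree = d - 1 := by
    rw [natDegree_cyclotomic, Nat.totient_prime hp]
  obtain ⟨g, hg⟩ := hdvd
  have hgne : g ≠ 0 := by rintro rfl; simp [hg] at hfne
  have hdeg : f.natDegree = (d - 1) + g.natDegree := by
    rw [hg, natDegree_mul (cyclotomic_ne_zero d ℚ) hgne, hdegc]
  have hg0 : g = C (g.coeff 0) := by
    have : g.natDegree = 0 := by omega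
    exact (Polynomial.eq_C_of_natDegree_eq_zero this)
  -- coefficients of cyclotomic prime
  have hcyc : ∀ j, j < d → (cyclotomic d ℚ).coeff j = 1 := by
    intro j hjd
    rw [cyclotomic_prime, finset_sum_coeff]
    simp only [coeff_X_pow]
    rw [Finset.sum_ite_eq (Finset.range d) j (fun _ => (1 : ℚ))]
    simp [hjd]
  have hfc : ∀ j, j < d → f.coeff j = (cyclotomic d ℚ).coeff j * g.coeff 0 := by
    intro j hjd
    conv_lhs => rw [hg, hg0]
    rw [mul_comm, coeff_C_mul, mul_comm]
  -- j₁ gives g.coeff 0 = 1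
  have hj₁d : j₁ < d := by have := (hmem j₁ hj₁); omega
  have h1 : g.coeff 0 = 1 := by
    have := hfc j₁ hj₁d
    rw [hcoeff j₁ (hmem j₁ hj₁).1, if_pos hj₁J, hcyc j₁ hj₁d, one_mul] at this
    exact this.symm
  -- proper: find i₀ ∈ Icc 1 k \ I
  obtain ⟨i₀, hi₀Icc, hi₀I⟩ : ∃ i₀ ∈ Finset.Icc 1 k, i₀ ∉ I := by
    by_contra h
    push_neg at h
    exact hproper (Finset.Subset.antisymm hI h)
  rw [Finset.mem_Icc] at hi₀Icc
  have hi₀J : i₀ ∉ J := by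
    intro h
    rcases Finset.mem_union.mp h with h | h
    · exact hi₀I h
    · obtain ⟨b, hb, hb'⟩ := Finset.mem_image.mp h
      obtain ⟨h1, h2⟩ := hmem b hb
      omega
  have h0 := hfc i₀ (by omega)
  rw [hcoeff i₀ hi₀Icc.1, if_neg hi₀J, hcyc i₀ (by omega), one_mul, h1] at h0
  exact one_ne_zero h0.symm
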